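/- Let n ≥ 1 and let μ₁, …, μ_l be positive integers. In the field K = ℚ(q,t,x₁,…,x_n), write p_k = x₁^k + … + x_n^k. Then ∑_{i=1}^{n} ( ∏_{j≠i} (t x_i − x_j)/(x_i − x_j) ) · ∏_{a=1}^{l} ( p_{μ_a} + (q^{μ_a} − 1) x_i^{μ_a} ) = (1/(1−t)) ∏_{a=1}^{l} p_{μ_a} + (t^n/(t−1)) · [ ∏_{i=1}^{n} (1 − z x_i)/(1 − z x_i t) · ∏_{a=1}^{l} ( p_{μ_a} + (q^{μ_a} − 1)(t z)^{−μ_a} ) ]_{z⁰}, where [·]_{z⁰} denotes the coefficient of z⁰ in the product of the formal power series expansion in z of ∏_i (1 − z x_i)/(1 − z x_i t) (expanding each 1/(1 − z x_i t) as a geometric series over K) with the Laurent polynomial ∏_a ( p_{μ_a} + (q^{μ_a} − 1)(t z)^{−μ_a} ) in z^{−1}. -/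

import Mathlib

noncomputable section

/-- The field `K = ℚ(q, t, x₁, …, x_n)`: `q` is the variable `Sum.inr 0`, `t` the variable
`Sum.inr 1`, and `x_i` the variable `Sum.inl i`. -/
abbrev K (n : ℕ) : Type := FractionRing (MvPolynomial (Fin n ⊕ Fin 2) ℚ)

def qv (n : ℕ) : K n :=
  algebraMap (MvPolynomial (Fin n ⊕ Fin 2) ℚ) (K n) (MvPolynomial.X (Sum.inr 0))

def tv (n : ℕ) : K n :=
  algebraMap (MvPolynomial (Fin n ⊕ Fin 2) ℚ) (K n) (MvPolynomial.X (Sum.inr 1))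

def xv (n : ℕ) (i : Fin n) : K n :=
  algebraMap (MvPolynomial (Fin n ⊕ Fin 2) ℚ) (K n) (MvPolynomial.X (Sum.inl i))

/-- The power sum `p_k = x₁^k + ⋯ + x_n^k`. -/
def pw (n : ℕ) (k : ℕ) : K n := ∑ i : Fin n, xv n i ^ k

/-- The constant embedding `K → K((z))` into formal Laurent series. -/
def cl (n : ℕ) : K n →+* LaurentSeries (K n) := HahnSeries.C

/-- The Laurent series variable `z`. -/
def zl (n : ℕ) : LaurentSeries (K n) := HahnSeries.single 1 1

/-!
Write `A_i = ∏_{j ≠ i} (t x_i - x_j) / (x_i - x_j)`. The polynomial identity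
`t^n ∏_i (1 - x_i z) - ∏_i (1 - t x_i z) = (t - 1) ∑_i A_i ∏_{j ≠ i} (1 - t x_j z)`
holds because both sides have degree `< n` (the leading coefficients on the left cancel) and
agree at the `n` distinct points `z = (t x_i)⁻¹`. Dividing by `∏_j (1 - t x_j z)` gives the
partial fraction expansion `t^n ∏_i (1 - x_i z)/(1 - t x_i z) = 1 + (t - 1) ∑_i A_i/(1 - t x_i z)`.

Multiply by `G(z) = ∏_a (p_{μ_a} + (q^{μ_a} - 1)(t z)^{-μ_a})` and take constant terms. `G` is a
polynomial in `z⁻¹` with constant term `∏_a p_{μ_a}`, and against the geometric series of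
`1/(1 - c z)` the monomial `z^{-k}` picks out `c^k`; so `[G/(1 - t x_i z)]_{z⁰}` is `G` evaluated
at `z = (t x_i)⁻¹`, namely `∏_a (p_{μ_a} + (q^{μ_a} - 1) x_i^{μ_a})`.
-/

open Finset

theorem HahnSeries.coeff_C_mul {Γ R : Type*} [AddCommMonoid Γ] [PartialOrder Γ]
    [IsOrderedCancelAddMonoid Γ] [Semiring R] (c : R) (H : HahnSeries Γ R) (m : Γ) :
    (HahnSeries.C c * H).coeff m = c * H.coeff m := by
  rw [HahnSeries.C_mul_eq_smul, HahnSeries.coeff_smul, smul_eq_mul]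

section GeometricSeries

variable {R : Type*} [CommRing R]

def geomSeries (c : R) : LaurentSeries R :=
  HahnSeries.ofPowerSeries ℤ R (PowerSeries.mk (c ^ ·))

theorem geomSeries_zero : geomSeries (0 : R) = 1 := by
  rw [geomSeries, ← map_one (HahnSeries.ofPowerSeries ℤ R)]
  congr 1
  ext k
  simp [PowerSeries.coeff_one, zero_pow_eq]

theorem one_sub_C_mul_single_mul_geomSeries (c : R) :
    (1 - HahnSeries.C c * HahnSeries.single 1 1) * geomSeries c = 1 := by
  have h : (1 - PowerSeries.C c * PowerSeries.X) * PowerSeries.mk (c ^ ·) = 1 := by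
    have := congrArg (PowerSeries.rescale c) (PowerSeries.mk_one_mul_one_sub_eq_one R)
    simpa [PowerSeries.rescale_X, PowerSeries.rescale_mk, mul_comm] using this
  simpa [geomSeries] using congrArg (HahnSeries.ofPowerSeries ℤ R) h

theorem coeff_geomSeries_mul_prod {ι : Type*} (s : Finset ι) (μ : ι → ℕ) (p e : ι → R)
    (c : R) (m : ℕ) :
    (geomSeries c * ∏ a ∈ s, (HahnSeries.C (p a) + HahnSeries.single (-(μ a : ℤ)) (e a))).coeff m
      = c ^ m * ∏ a ∈ s, (p a + e a * c ^ μ a) := by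
  induction s using Finset.cons_induction generalizing m with
  | empty => simp [geomSeries]
  | cons b s hb ih =>
    set H := geomSeries c * ∏ a ∈ s, (HahnSeries.C (p a) + HahnSeries.single (-(μ a : ℤ)) (e a))
    have hsplit : geomSeries c * ∏ a ∈ cons b s hb,
        (HahnSeries.C (p a) + HahnSeries.single (-(μ a : ℤ)) (e a)) =
        HahnSeries.C (p b) * H + HahnSeries.single (-(μ b : ℤ)) (e b) * H := by
      rw [prod_cons]; ring
    have hshift :
        (HahnSeries.single (-(μ b : ℤ)) (e b) * H).coeff m = e b * H.coeff ↑(m + μ b) := by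
      simpa using HahnSeries.coeff_single_mul_add (r := e b) (x := H) (a := ↑(m + μ b))
        (b := -(μ b : ℤ))
    rw [hsplit, HahnSeries.coeff_add, HahnSeries.coeff_C_mul, hshift, ih, ih, prod_cons, pow_add]
    ring

end GeometricSeries

theorem C_mul_C_mul_single_zpow_neg {F : Type*} [Field F] (e t : F) (m : ℕ) :
    HahnSeries.C e * (HahnSeries.C t * HahnSeries.single 1 1 : LaurentSeries F) ^ (-(m : ℤ)) =
      HahnSeries.single (-(m : ℤ)) (e * (t ^ m)⁻¹) := by
  rw [HahnSeries.C_apply, HahnSeries.C_apply, HahnSeries.single_mul_single, zero_add, mul_one,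
    zpow_neg, zpow_natCast, HahnSeries.single_pow, HahnSeries.inv_single,
    HahnSeries.single_mul_single]
  simp

theorem coeff_zero_geomSeries_mul_prod {F ι : Type*} [Field F] {t : F} (ht : t ≠ 0)
    (s : Finset ι) (μ : ι → ℕ) (p r : ι → F) (y : F) :
    (geomSeries (t * y) * ∏ a ∈ s, (HahnSeries.C (p a) +
        HahnSeries.C (r a) * (HahnSeries.C t * HahnSeries.single 1 1) ^ (-(μ a : ℤ)))).coeff 0 =
      ∏ a ∈ s, (p a + r a * y ^ μ a) := by
  simp only [C_mul_C_mul_single_zpow_neg]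
  have h := coeff_geomSeries_mul_prod s μ p (fun a => r a * (t ^ μ a)⁻¹) (t * y) 0
  rw [Nat.cast_zero, pow_zero, one_mul] at h
  rw [h]
  refine prod_congr rfl fun a _ => ?_
  field_simp
  ring

section PartialFractions

open Polynomial

theorem natDegree_one_sub_C_mul_X_le {R : Type*} [CommRing R] (c : R) :
    (1 - C c * X).natDegree ≤ 1 := by
  rw [sub_eq_neg_add, ← C_1, ← neg_mul, ← C_neg]
  exact natDegree_linear_le

theorem natDegree_prod_one_sub_C_mul_X_le {R ι : Type*} [CommRing R] (s : Finset ι)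
    (c : ι → R) : (∏ i ∈ s, (1 - C (c i) * X)).natDegree ≤ #s :=
  (natDegree_prod_le _ _).trans <| by
    simpa using sum_le_sum fun i (_ : i ∈ s) => natDegree_one_sub_C_mul_X_le (c i)

theorem coeff_prod_one_sub_C_mul_X_card {R ι : Type*} [CommRing R] (s : Finset ι) (c : ι → R) :
    (∏ i ∈ s, (1 - C (c i) * X)).coeff #s = ∏ i ∈ s, -c i := by
  rw [← mul_one #s, coeff_prod_of_natDegree_le s _ 1 fun i _ => natDegree_one_sub_C_mul_X_le _]
  simp [coeff_one]

theorem degree_C_pow_mul_prod_sub_prod_lt {R ι : Type*} [CommRing R] (s : Finset ι) (t : R)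
    (x : ι → R) :
    (C (t ^ #s) * ∏ i ∈ s, (1 - C (x i) * X) - ∏ i ∈ s, (1 - C (t * x i) * X)).degree < #s := by
  refine degree_lt_iff_coeff_zero _ _ |>.mpr fun m hm => ?_
  rw [coeff_sub, coeff_C_mul]
  obtain rfl | hlt := hm.eq_or_lt
  · rw [coeff_prod_one_sub_C_mul_X_card, coeff_prod_one_sub_C_mul_X_card]
    simp only [← mul_neg, prod_mul_distrib, prod_const, sub_self]
  · rw [coeff_eq_zero_of_natDegree_lt ((natDegree_prod_one_sub_C_mul_X_le s x).trans_lt hlt),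
      coeff_eq_zero_of_natDegree_lt ((natDegree_prod_one_sub_C_mul_X_le s _).trans_lt hlt)]
    ring

variable {F ι : Type*} [Field F] [Fintype ι] [DecidableEq ι]

def partialFractionCoeff (t : F) (x : ι → F) (i : ι) : F :=
  ∏ j ∈ univ.erase i, (t * x i - x j) / (x i - x j)

variable {t : F} {x : ι → F}

theorem pow_card_mul_prod_one_sub_mul_inv (ht : t ≠ 0) (hx : ∀ i, x i ≠ 0)
    (hxinj : Function.Injective x) (i : ι) :
    t ^ Fintype.card ι * ∏ j, (1 - x j * (t * x i)⁻¹) =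
      (t - 1) * (partialFractionCoeff t x i * ∏ j ∈ univ.erase i, (1 - t * x j * (t * x i)⁻¹)) := by
  have hi : t * (1 - x i * (t * x i)⁻¹) = t - 1 := by field_simp [hx i]
  have hj : ∀ j ∈ univ.erase i, t * (1 - x j * (t * x i)⁻¹) =
      (t * x i - x j) / (x i - x j) * (1 - t * x j * (t * x i)⁻¹) := fun j hj => by
    have : x i - x j ≠ 0 := sub_ne_zero.mpr (hxinj.ne (ne_of_mem_erase hj).symm)
    field_simp [hx i]
  rw [← card_univ, ← prod_const, ← prod_mul_distrib, ← mul_prod_erase _ _ (mem_univ i), hi,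
    prod_congr rfl hj, prod_mul_distrib, partialFractionCoeff]

theorem C_pow_mul_prod_one_sub_C_mul_X (ht : t ≠ 0) (hx : ∀ i, x i ≠ 0)
    (hxinj : Function.Injective x) :
    C (t ^ Fintype.card ι) * ∏ i, (1 - C (x i) * X) =
      ∏ i, (1 - C (t * x i) * X) + C (t - 1) *
        ∑ i, C (partialFractionCoeff t x i) * ∏ j ∈ univ.erase i, (1 - C (t * x j) * X) := by
  rw [← sub_eq_iff_eq_add']
  have hvanish : ∀ i, ∀ s : Finset ι, i ∈ s → ∏ j ∈ s, (1 - t * x j * (t * x i)⁻¹) = 0 :=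
    fun i s hi => prod_eq_zero hi (by rw [mul_inv_cancel₀ (mul_ne_zero ht (hx i)), sub_self])
  refine eq_of_degrees_lt_of_eval_index_eq (v := fun i => (t * x i)⁻¹) univ
    (fun i _ j _ h => hxinj (mul_left_cancel₀ ht (inv_injective h))) ?_ ?_ fun i _ => ?_
  · simpa using degree_C_pow_mul_prod_sub_prod_lt univ t x
  · rw [← mem_degreeLT, C_mul']
    refine Submodule.smul_mem _ _ (Submodule.sum_mem _ fun i _ => ?_)
    rw [C_mul']
    refine Submodule.smul_mem _ _ (mem_degreeLT.mpr (degree_le_natDegree.trans_lt ?_))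
    exact_mod_cast (natDegree_prod_one_sub_C_mul_X_le _ _).trans_lt
      (card_erase_lt_of_mem (mem_univ i))
  · simp only [eval_sub, eval_mul, eval_C, eval_prod, eval_finsetSum, eval_one, eval_X]
    rw [hvanish i univ (mem_univ i), sub_zero, sum_eq_single i
      (fun k _ hk => by rw [hvanish i _ (mem_erase.mpr ⟨Ne.symm hk, mem_univ i⟩), mul_zero])
      (by simp), pow_card_mul_prod_one_sub_mul_inv ht hx hxinj i]

theorem C_pow_mul_prod_div_one_sub (ht : t ≠ 0) (hx : ∀ i, x i ≠ 0)
    (hxinj : Function.Injective x) :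
    HahnSeries.C (t ^ Fintype.card ι) * ∏ i, (1 - HahnSeries.single 1 1 * HahnSeries.C (x i)) /
        (1 - HahnSeries.single 1 1 * HahnSeries.C (x i) * HahnSeries.C t : LaurentSeries F) =
      1 + HahnSeries.C (t - 1) *
        ∑ i, HahnSeries.C (partialFractionCoeff t x i) * geomSeries (t * x i) := by
  set z : LaurentSeries F := HahnSeries.single 1 1
  set D : ι → LaurentSeries F := fun i => 1 - HahnSeries.C (t * x i) * z
  have hDg : ∀ i, D i * geomSeries (t * x i) = 1 := fun i =>
    one_sub_C_mul_single_mul_geomSeries _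
  have hD : ∏ i, D i ≠ 0 := prod_ne_zero_iff.mpr fun i _ => left_ne_zero_of_mul_eq_one (hDg i)
  have hpoly := congrArg (eval₂ HahnSeries.C z) (C_pow_mul_prod_one_sub_C_mul_X ht hx hxinj)
  simp only [eval₂_add, eval₂_mul, eval₂_C, eval₂_X, eval₂_sub, eval₂_one, eval₂_finsetProd,
    eval₂_finsetSum] at hpoly
  have hgeom : ∀ i, (∏ j ∈ univ.erase i, D j) / ∏ j, D j = geomSeries (t * x i) := fun i => by
    rw [← mul_prod_erase _ _ (mem_univ i)] at hD ⊢
    rw [div_mul_cancel_right₀ (right_ne_zero_of_mul hD), ← one_div,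
      eq_one_div_of_mul_eq_one_right (hDg i)]
  calc _ = HahnSeries.C (t ^ Fintype.card ι) * (∏ i, (1 - HahnSeries.C (x i) * z)) / ∏ i, D i := by
        rw [mul_div_assoc, ← prod_div_distrib]
        refine congrArg _ (prod_congr rfl fun i _ => ?_)
        simp only [D, map_mul]
        ring
    _ = 1 + HahnSeries.C (t - 1) * ∑ i, HahnSeries.C (partialFractionCoeff t x i) *
          ((∏ j ∈ univ.erase i, D j) / ∏ j, D j) := by
        rw [hpoly, add_div, div_self hD, mul_div_assoc, sum_div]
        simp only [mul_div_assoc, D]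
    _ = _ := by simp only [hgeom]

theorem coeff_C_pow_mul_prod_div_one_sub_mul (ht : t ≠ 0) (hx : ∀ i, x i ≠ 0)
    (hxinj : Function.Injective x) (G : LaurentSeries F) (m : ℤ) :
    t ^ Fintype.card ι * ((∏ i, (1 - HahnSeries.single 1 1 * HahnSeries.C (x i)) /
        (1 - HahnSeries.single 1 1 * HahnSeries.C (x i) * HahnSeries.C t)) * G).coeff m =
      G.coeff m +
        (t - 1) * ∑ i, partialFractionCoeff t x i * (geomSeries (t * x i) * G).coeff m := by
  rw [← HahnSeries.coeff_C_mul, ← mul_assoc, C_pow_mul_prod_div_one_sub ht hx hxinj, add_mul,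
    one_mul, HahnSeries.coeff_add, mul_assoc, HahnSeries.coeff_C_mul, sum_mul, HahnSeries.coeff_sum]
  simp only [mul_assoc, HahnSeries.coeff_C_mul]

end PartialFractions

section RationalFunctionField

variable (n : ℕ)

theorem xv_injective : Function.Injective (xv n) :=
  (IsFractionRing.injective _ _).comp (MvPolynomial.X_injective.comp Sum.inl_injective)

theorem xv_ne_zero (i : Fin n) : xv n i ≠ 0 := by
  simp [xv, MvPolynomial.X_ne_zero]

theorem tv_ne_zero : tv n ≠ 0 := by
  simp [tv, MvPolynomial.X_ne_zero]

theorem tv_ne_one : tv n ≠ 1 := by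
  simpa [tv] using fun h => by simpa using congrArg MvPolynomial.constantCoeff h

end RationalFunctionField

theorem D1_vertex_identity_general (n l : ℕ) (μ : Fin l → ℕ) :
    ∑ i : Fin n,
        (∏ j ∈ Finset.univ.erase i, (tv n * xv n i - xv n j) / (xv n i - xv n j)) *
          ∏ a : Fin l, (pw n (μ a) + (qv n ^ μ a - 1) * xv n i ^ μ a) =
      (1 / (1 - tv n)) * ∏ a : Fin l, pw n (μ a) +
        (tv n ^ n / (tv n - 1)) *
          (((∏ i : Fin n,
              (1 - zl n * cl n (xv n i)) / (1 - zl n * cl n (xv n i) * cl n (tv n))) *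
            ∏ a : Fin l,
              (cl n (pw n (μ a)) +
                cl n (qv n ^ μ a - 1) * (cl n (tv n) * zl n) ^ (-(μ a : ℤ)))).coeff 0) := by
  unfold cl zl
  set G : LaurentSeries (K n) := ∏ a : Fin l, (HahnSeries.C (pw n (μ a)) +
    HahnSeries.C (qv n ^ μ a - 1) * (HahnSeries.C (tv n) * HahnSeries.single 1 1) ^ (-(μ a : ℤ)))
  have hG (y : K n) : (geomSeries (tv n * y) * G).coeff 0 =
      ∏ a, (pw n (μ a) + (qv n ^ μ a - 1) * y ^ μ a) :=
    coeff_zero_geomSeries_mul_prod (tv_ne_zero n) univ μ (fun a => pw n (μ a)) _ y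
  have hG0 : G.coeff 0 = ∏ a, pw n (μ a) := by
    rw [← one_mul G, ← geomSeries_zero, ← mul_zero (tv n), hG]
    refine prod_congr rfl fun a _ => ?_
    -- for `μ a = 0` the factor `q ^ 0 - 1` vanishes instead of `0 ^ μ a`
    rcases eq_or_ne (μ a) 0 with h | h <;> simp [h]
  have hFG :=
    coeff_C_pow_mul_prod_div_one_sub_mul (tv_ne_zero n) (xv_ne_zero n) (xv_injective n) G 0
  rw [Fintype.card_fin, hG0] at hFG
  simp only [hG, partialFractionCoeff] at hFG
  have ht1 : tv n - 1 ≠ 0 := sub_ne_zero.mpr (tv_ne_one n)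
  have ht1' : 1 - tv n ≠ 0 := sub_ne_zero.mpr (tv_ne_one n).symm
  rw [div_mul_eq_mul_div (tv n ^ n), hFG]
  field_simp
  ring

/-- The `D¹_n`-identity on power sums: in `K = ℚ(q,t,x₁,…,x_n)`,
`∑_i (∏_{j≠i} (t x_i - x_j)/(x_i - x_j)) ∏_a (p_{μ_a} + (q^{μ_a}-1) x_i^{μ_a})
 = (1/(1-t)) ∏_a p_{μ_a} + (t^n/(t-1)) [∏_i (1-z x_i)/(1-z x_i t) ·
    ∏_a (p_{μ_a} + (q^{μ_a}-1)(tz)^{-μ_a})]_{z⁰}`,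
where the bracket is the coefficient of `z⁰` in the formal Laurent series, each
`1/(1 - z x_i t)` being expanded as a geometric power series in `z` (which is its inverse in
the field of formal Laurent series `K((z))`). -/
theorem D1_vertex_identity (n l : ℕ) (hn : 1 ≤ n) (μ : Fin l → ℕ) (hμ : ∀ a, 1 ≤ μ a) :
    ∑ i : Fin n,
        (∏ j ∈ Finset.univ.erase i, (tv n * xv n i - xv n j) / (xv n i - xv n j)) *
          ∏ a : Fin l, (pw n (μ a) + (qv n ^ μ a - 1) * xv n i ^ μ a) =
      (1 / (1 - tv n)) * ∏ a : Fin l, pw n (μ a) +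
        (tv n ^ n / (tv n - 1)) *
          (((∏ i : Fin n,
              (1 - zl n * cl n (xv n i)) / (1 - zl n * cl n (xv n i) * cl n (tv n))) *
            ∏ a : Fin l,
              (cl n (pw n (μ a)) +
                cl n (qv n ^ μ a - 1) * (cl n (tv n) * zl n) ^ (-(μ a : ℤ)))).coeff 0) :=
  D1_vertex_identity_general n l μ
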